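/- Let L be a lexideal in S = K[X_1,...,X_n] containing no power of X_n, let G be the minimal system of monomial generators of L (the monomials of L that are not of the form X_j·w with w a monomial in L), and let L̂ be the ideal generated by the binomials {v − φ(v) : v ∈ G}. Then for every monomial u ∈ L, we have u ≡ φ(u) (mod L̂), i.e., u − φ(u) ∈ L̂. -/

import Mathlib

/-- The degree of a monomial in `K[X_1,…,X_n]`, encoded as its exponent vector
`σ : Fin n →₀ ℕ` (so `σ` encodes `X_1^{σ 0} ⋯ X_n^{σ (n-1)}`). -/
def mdeg {n : ℕ} (σ : Fin n →₀ ℕ) : ℕ := ∑ j, σ j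

/-- The strict graded lexicographic order on monomials (exponent vectors), for the
variable order `X_1 > ⋯ > X_n` (coordinate `0` corresponds to `X_1`): `u < v` iff
`deg u < deg v`, or the degrees are equal and at the first coordinate where `u, v`
differ, `u` has the smaller exponent. -/
def glexLt {n : ℕ} (u v : Fin n →₀ ℕ) : Prop :=
  mdeg u < mdeg v ∨ (mdeg u = mdeg v ∧ ∃ j : Fin n, u j < v j ∧ ∀ k, k < j → u k = v k)

/-- The graded lexicographic order: `glexLe u v` means `u ≤ v`. -/
def glexLe {n : ℕ} (u v : Fin n →₀ ℕ) : Prop := u = v ∨ glexLt u v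

/-- A lexsegment in degree `i`: a set of monomials of the form `{u ∈ M_i | u ≥ v}`
for some monomial `v` of degree `i`. -/
def IsLexSegment {n : ℕ} (i : ℕ) (C : Set (Fin n →₀ ℕ)) : Prop :=
  ∃ v : Fin n →₀ ℕ, mdeg v = i ∧ C = {u | mdeg u = i ∧ glexLe v u}

/-- A monomial ideal: an ideal generated by monomials. -/
def IsMonomialIdeal {K : Type*} [Field K] {n : ℕ} (J : Ideal (MvPolynomial (Fin n) K)) : Prop :=
  ∃ T : Set (Fin n →₀ ℕ), J = Ideal.span ((fun σ => MvPolynomial.monomial σ (1 : K)) '' T)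

/-- A lexideal: a monomial ideal `L` such that, for every `i ≥ 1` with `L ∩ M_i ≠ ∅`,
the set of degree-`i` monomials of `L` is a lexsegment. -/
def IsLexIdeal {K : Type*} [Field K] {n : ℕ} (L : Ideal (MvPolynomial (Fin n) K)) : Prop :=
  IsMonomialIdeal L ∧ ∀ i : ℕ, 1 ≤ i →
    ({σ : Fin n →₀ ℕ | mdeg σ = i ∧ MvPolynomial.monomial σ (1 : K) ∈ L}).Nonempty →
    IsLexSegment i {σ : Fin n →₀ ℕ | mdeg σ = i ∧ MvPolynomial.monomial σ (1 : K) ∈ L}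

/-- The map `φ : u ↦ u·X_n/X_{min(u)}` on nonconstant monomials, where `min(u)` is the
least index of a variable dividing `u` (and `X_n` is the last variable). On the zero
exponent vector (the monomial `1`), `φ` is the identity by convention. -/
noncomputable def phi {n : ℕ} (hn : 0 < n) (σ : Fin n →₀ ℕ) : Fin n →₀ ℕ :=
  if h : σ.support.Nonempty then
    σ - Finsupp.single (σ.support.min' h) 1 + Finsupp.single ⟨n - 1, Nat.sub_lt hn Nat.one_pos⟩ 1
  else σ

/-- The minimal system of monomial generators of a monomial ideal `L`: the monomials of
`L` that are not of the form `X_j·w` with `w` a monomial of `L`. -/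
def minGens {K : Type*} [Field K] {n : ℕ} (L : Ideal (MvPolynomial (Fin n) K)) :
    Set (Fin n →₀ ℕ) :=
  {σ | MvPolynomial.monomial σ (1 : K) ∈ L ∧
    ¬ ∃ (j : Fin n) (τ : Fin n →₀ ℕ),
        MvPolynomial.monomial τ (1 : K) ∈ L ∧ σ = τ + Finsupp.single j 1}

/-!
Induct on the degree of `u ∈ L`. If `u` is not a minimal generator, write `u = X_j w` with
`w ∈ L`; then `w ≠ 1` as `1 = X_n^0 ∉ L`, and we let `X_m = X_{min(w)}`. When `m ≤ j`,
`φ(u) = X_j φ(w)`, so `u - φ(u) = X_j (w - φ(w))`. When `j < m`, the monomial `w' = X_j w / X_m`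
has the degree of `w` and is lex-larger, so it lies in `L` because `L` is a lexideal; moreover
`φ(w') = φ(w)` and `X_j φ(w) = X_n w'`, which give
`u - φ(u) = X_j (w - φ(w)) + X_n ((w' - φ(w')) - (w - φ(w)))`.
-/

open MvPolynomial Finsupp

section Monomials

variable {n : ℕ}

lemma mdeg_eq_degree (σ : Fin n →₀ ℕ) : mdeg σ = σ.degree := (degree_eq_sum σ).symm

lemma glexLt_trans {a b c : Fin n →₀ ℕ} (hab : glexLt a b) (hbc : glexLt b c) :
    glexLt a c := by
  rcases hab with hab | ⟨hab, i, hi, hlt_i⟩ <;> rcases hbc with hbc | ⟨hbc, j, hj, hlt_j⟩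
  · exact .inl (hab.trans hbc)
  · exact .inl (hbc ▸ hab)
  · exact .inl (hab ▸ hbc)
  · refine .inr ⟨hab.trans hbc, ?_⟩
    rcases lt_trichotomy i j with h | rfl | h
    · exact ⟨i, hlt_j i h ▸ hi, fun k hk => (hlt_i k hk).trans (hlt_j k (hk.trans h))⟩
    · exact ⟨i, hi.trans hj, fun k hk => (hlt_i k hk).trans (hlt_j k hk)⟩
    · exact ⟨j, hlt_i j h ▸ hj, fun k hk => (hlt_i k (hk.trans h)).trans (hlt_j k hk)⟩

lemma mdeg_sub_single_add_single {τ : Fin n →₀ ℕ} {m : Fin n} (hm : τ m ≠ 0) (j : Fin n) :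
    mdeg (τ - single m 1 + single j 1) = mdeg τ := by
  have hτ : τ - single m 1 + single m 1 = τ :=
    tsub_add_cancel_of_le (single_le_iff.mpr (Nat.one_le_iff_ne_zero.mpr hm))
  have := congrArg degree hτ
  simp only [map_add, degree_single] at this
  simp only [mdeg_eq_degree, map_add, degree_single]
  omega

lemma glexLt_sub_single_add_single {τ : Fin n →₀ ℕ} {j m : Fin n} (hjm : j < m)
    (hm : τ m ≠ 0) : glexLt τ (τ - single m 1 + single j 1) := by
  refine .inr ⟨(mdeg_sub_single_add_single hm j).symm, j, ?_, fun k hk => ?_⟩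
  · simp [hjm.ne']
  · simp [hk.ne', (hk.trans hjm).ne']

end Monomials

section Support

variable {ι : Type*} [Preorder ι] {τ : ι →₀ ℕ} {j m : ι}

lemma isLeast_support_add_single_of_le (h : IsLeast (τ.support : Set ι) m) (hmj : m ≤ j) :
    IsLeast ((τ + single j 1).support : Set ι) m := by
  refine ⟨support_mono le_self_add h.1, fun k hk => ?_⟩
  by_cases hkj : j = k
  · exact hkj ▸ hmj
  · exact h.2 (by simpa [single_apply, hkj] using hk)

lemma isLeast_support_add_single_of_mem_lowerBounds (hj : j ∈ lowerBounds (τ.support : Set ι)) :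
    IsLeast ((τ + single j 1).support : Set ι) j := by
  refine ⟨by simp, fun k hk => ?_⟩
  by_cases hkj : j = k
  · exact hkj.le
  · exact hj (by simpa [single_apply, hkj] using hk)

end Support

section Phi

variable {n : ℕ} (hn : 0 < n) {τ : Fin n →₀ ℕ} {j m : Fin n}

def lastVar : Fin n := ⟨n - 1, Nat.sub_lt hn Nat.one_pos⟩

lemma phi_of_isLeast (h : IsLeast (τ.support : Set (Fin n)) m) :
    phi hn τ = τ - single m 1 + single (lastVar hn) 1 := by
  have hne : τ.support.Nonempty := ⟨m, h.1⟩
  rw [phi, dif_pos hne, (τ.support.isLeast_min' hne).unique h]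
  rfl

lemma phi_add_single_of_le (h : IsLeast (τ.support : Set (Fin n)) m) (hmj : m ≤ j) :
    phi hn (τ + single j 1) = phi hn τ + single j 1 := by
  have hm : τ m ≠ 0 := by simpa using h.1
  rw [phi_of_isLeast hn (isLeast_support_add_single_of_le h hmj), phi_of_isLeast hn h]
  ext k
  simp only [Finsupp.coe_add, coe_tsub, Pi.add_apply, Pi.sub_apply, single_apply]
  split_ifs <;> (try subst_vars) <;> omega

lemma phi_add_single_of_mem_lowerBounds (hj : j ∈ lowerBounds (τ.support : Set (Fin n))) :
    phi hn (τ + single j 1) = τ + single (lastVar hn) 1 := by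
  rw [phi_of_isLeast hn (isLeast_support_add_single_of_mem_lowerBounds hj), add_tsub_cancel_right]

lemma mem_lowerBounds_support_sub_single (h : IsLeast (τ.support : Set (Fin n)) m) (hjm : j < m) :
    j ∈ lowerBounds ((τ - single m 1).support : Set (Fin n)) := fun _ hk =>
  hjm.le.trans (h.2 (support_mono tsub_le_self hk))

lemma phi_sub_single_add_single (h : IsLeast (τ.support : Set (Fin n)) m) (hjm : j < m) :
    phi hn (τ - single m 1 + single j 1) = phi hn τ := by
  rw [phi_add_single_of_mem_lowerBounds hn (mem_lowerBounds_support_sub_single h hjm),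
    phi_of_isLeast hn h]

end Phi

section Binomial

variable (R : Type*) [CommRing R] {n : ℕ} (hn : 0 < n) {τ : Fin n →₀ ℕ} {j m : Fin n}

noncomputable def phiBinomial (σ : Fin n →₀ ℕ) : MvPolynomial (Fin n) R :=
  monomial σ 1 - monomial (phi hn σ) 1

lemma phiBinomial_add_single_of_le (h : IsLeast (τ.support : Set (Fin n)) m) (hmj : m ≤ j) :
    phiBinomial R hn (τ + single j 1) = X j * phiBinomial R hn τ := by
  simp only [phiBinomial, phi_add_single_of_le hn h hmj, monomial_add_single, pow_one]
  ring

lemma phiBinomial_add_single_of_lt (h : IsLeast (τ.support : Set (Fin n)) m) (hjm : j < m) :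
    phiBinomial R hn (τ + single j 1) = X j * phiBinomial R hn τ +
      X (lastVar hn) * (phiBinomial R hn (τ - single m 1 + single j 1) - phiBinomial R hn τ) := by
  have hj : j ∈ lowerBounds (τ.support : Set (Fin n)) := fun k hk => hjm.le.trans (h.2 hk)
  simp only [phiBinomial, phi_add_single_of_mem_lowerBounds hn hj,
    phi_sub_single_add_single hn h hjm, phi_of_isLeast hn h, monomial_add_single, pow_one]
  ring

end Binomial

section LexIdeal

variable {K : Type*} [Field K] {n : ℕ} {L : Ideal (MvPolynomial (Fin n) K)}

lemma IsLexIdeal.monomial_mem_of_glexLt (hlex : IsLexIdeal L) {τ τ' : Fin n →₀ ℕ}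
    (hτ : monomial τ (1 : K) ∈ L) (hτ0 : τ ≠ 0) (hdeg : mdeg τ' = mdeg τ)
    (hlt : glexLt τ τ') : monomial τ' (1 : K) ∈ L := by
  have hpos : 1 ≤ mdeg τ := by
    rw [mdeg_eq_degree, Nat.one_le_iff_ne_zero, Ne, degree_eq_zero_iff]
    exact hτ0
  obtain ⟨v, -, hseg⟩ := hlex.2 (mdeg τ) hpos ⟨τ, rfl, hτ⟩
  have hvτ : glexLe v τ := by
    have : τ ∈ {u | mdeg u = mdeg τ ∧ monomial u (1 : K) ∈ L} := ⟨rfl, hτ⟩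
    exact (hseg ▸ this).2
  have hvτ' : glexLe v τ' := .inr (hvτ.elim (· ▸ hlt) (glexLt_trans · hlt))
  have : τ' ∈ {u | mdeg u = mdeg τ ∧ glexLe v u} := ⟨hdeg, hvτ'⟩
  exact (hseg ▸ this).2

end LexIdeal

/-- Let `L` be a lexideal in `S = K[X_1,…,X_n]` containing no power of `X_n`, let `G` be
the minimal system of monomial generators of `L`, and `L̂` the ideal generated by the
binomials `{v − φ(v) : v ∈ G}`. Then for every monomial `u ∈ L` we have
`u ≡ φ(u) (mod L̂)`, i.e. `u − φ(u) ∈ L̂`. -/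
theorem stmt14 (K : Type*) [Field K] (n : ℕ) (hn : 0 < n)
    (L : Ideal (MvPolynomial (Fin n) K)) (hlex : IsLexIdeal L)
    (hXn : ∀ k : ℕ,
      (MvPolynomial.X (⟨n - 1, Nat.sub_lt hn Nat.one_pos⟩ : Fin n) : MvPolynomial (Fin n) K) ^ k
        ∉ L) :
    ∀ σ : Fin n →₀ ℕ, MvPolynomial.monomial σ (1 : K) ∈ L →
      MvPolynomial.monomial σ (1 : K) - MvPolynomial.monomial (phi hn σ) (1 : K) ∈
        Ideal.span ((fun v => MvPolynomial.monomial v (1 : K)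
          - MvPolynomial.monomial (phi hn v) (1 : K)) '' minGens L) := by
  intro σ hσ
  change phiBinomial K hn σ ∈ Ideal.span (phiBinomial K hn '' minGens L)
  induction hd : mdeg σ using Nat.strong_induction_on generalizing σ with
  | _ d ih =>
  by_cases hG : σ ∈ minGens L
  · exact Ideal.subset_span ⟨σ, hG, rfl⟩
  obtain ⟨j, τ, hτ, rfl⟩ : ∃ j τ, monomial τ (1 : K) ∈ L ∧ σ = τ + single j 1 := by
    simpa [minGens, hσ] using hG
  have hτ0 : τ ≠ 0 := by
    rintro rfl
    exact hXn 0 (by simpa using hτ)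
  have hdeg : mdeg τ < d := by simp [← hd, mdeg_eq_degree]
  have hτL := ih _ hdeg τ hτ rfl
  obtain ⟨m, hmin⟩ : ∃ m, IsLeast (τ.support : Set (Fin n)) m :=
    ⟨_, τ.support.isLeast_min' (support_nonempty_iff.mpr hτ0)⟩
  rcases le_or_gt m j with hmj | hjm
  · rw [phiBinomial_add_single_of_le K hn hmin hmj]
    exact Ideal.mul_mem_left _ _ hτL
  · have hm : τ m ≠ 0 := by simpa using hmin.1
    have hτ'deg := mdeg_sub_single_add_single hm j
    have hτ'L := ih _ hdeg _ (hlex.monomial_mem_of_glexLt hτ hτ0 hτ'deg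
      (glexLt_sub_single_add_single hjm hm)) hτ'deg
    rw [phiBinomial_add_single_of_lt K hn hmin hjm]
    exact Ideal.add_mem _ (Ideal.mul_mem_left _ _ hτL)
      (Ideal.mul_mem_left _ _ (Ideal.sub_mem _ hτ'L hτL))
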